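/- arXiv:2201.00110 — 2 statements merged into one kernel-verified Lean document; each statement's English description precedes it below -/
import Mathlib

section
/- Let X be a compact metric space and f : X → X a homeomorphism such that every point of X is positively recurrent, f is expansive, and f has the pseudo orbit tracing property. Then X is finite. -/
open Filter Topology

/-- The `n`-th iterate (`n ∈ ℤ`) of a homeomorphism `f`, as a map `X → X`. -/
def iterZ {X : Type*} [TopologicalSpace X] (f : X ≃ₜ X) (n : ℤ) : X → X :=
  ⇑(f.toEquiv ^ n)

/-- The ω-limit set of `x`: limits of `f^{nᵢ}(x)` along strictly increasing
sequences `0 < n₁ < n₂ < ⋯`. -/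
def posLimitSet {X : Type*} [TopologicalSpace X] (f : X ≃ₜ X) (x : X) : Set X :=
  {y | ∃ n : ℕ → ℕ, StrictMono n ∧ 0 < n 0 ∧
    Tendsto (fun i => iterZ f (n i) x) atTop (𝓝 y)}

/-- The α-limit set of `x`: limits of `f^{-nᵢ}(x)` along strictly increasing
sequences `0 < n₁ < n₂ < ⋯`. -/
def negLimitSet {X : Type*} [TopologicalSpace X] (f : X ≃ₜ X) (x : X) : Set X :=
  {y | ∃ n : ℕ → ℕ, StrictMono n ∧ 0 < n 0 ∧
    Tendsto (fun i => iterZ f (-(n i : ℤ)) x) atTop (𝓝 y)}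

/-- `x` is recurrent if it is positively or negatively recurrent. -/
def RecurrentPt {X : Type*} [TopologicalSpace X] (f : X ≃ₜ X) (x : X) : Prop :=
  x ∈ posLimitSet f x ∨ x ∈ negLimitSet f x

/-- `f` is expansive with expansivity constant `c`. -/
def ExpansiveWith {X : Type*} [MetricSpace X] (f : X ≃ₜ X) (c : ℝ) : Prop :=
  0 < c ∧ ∀ x y : X, x ≠ y → ∃ n : ℤ, c < dist (iterZ f n x) (iterZ f n y)

/-- `f` is expansive. -/
def Expansive {X : Type*} [MetricSpace X] (f : X ≃ₜ X) : Prop :=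
  ∃ c : ℝ, ExpansiveWith f c

/-- The full orbit `{fⁿ(x) : n ∈ ℤ}` of a point. -/
def fullOrbit {X : Type*} [TopologicalSpace X] (f : X ≃ₜ X) (x : X) : Set X :=
  Set.range fun n : ℤ => iterZ f n x

/-- `E` is a minimal set: nonempty, closed, invariant (`f(E) = E`), with no proper
nonempty closed invariant subset. -/
def IsMinimalSet {X : Type*} [TopologicalSpace X] (f : X ≃ₜ X) (E : Set X) : Prop :=
  E.Nonempty ∧ IsClosed E ∧ f '' E = E ∧
    ∀ E' ⊆ E, E'.Nonempty → IsClosed E' → f '' E' = E' → E' = E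

/-- `x` is almost periodic: the closure of its orbit is a minimal set. -/
def AlmostPeriodicPt {X : Type*} [TopologicalSpace X] (f : X ≃ₜ X) (x : X) : Prop :=
  IsMinimalSet f (closure (fullOrbit f x))

/-- The left shift `σ` on `ℤ → F`, as a homeomorphism. -/
def shiftH (F : Type*) [TopologicalSpace F] : (ℤ → F) ≃ₜ (ℤ → F) where
  toFun x n := x (n + 1)
  invFun x n := x (n - 1)
  left_inv x := by funext n; simp
  right_inv x := by funext n; simp
  continuous_toFun := continuous_pi fun n => continuous_apply (n + 1)
  continuous_invFun := continuous_pi fun n => continuous_apply (n - 1)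

/-- The `n`-th power (`n ∈ ℕ`) of a homeomorphism, as a homeomorphism. -/
def hpow {X : Type*} [TopologicalSpace X] (f : X ≃ₜ X) : ℕ → X ≃ₜ X
  | 0 => Homeomorph.refl X
  | n + 1 => (hpow f n).trans f

/-- The local stable set `W^s_ε(x)`. -/
def localStable {X : Type*} [MetricSpace X] (f : X ≃ₜ X) (ε : ℝ) (x : X) : Set X :=
  {y | ∀ n : ℕ, dist (iterZ f n x) (iterZ f n y) ≤ ε}

/-- The local unstable set `W^u_ε(x)`. -/
def localUnstable {X : Type*} [MetricSpace X] (f : X ≃ₜ X) (ε : ℝ) (x : X) : Set X :=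
  {y | ∀ n : ℕ, dist (iterZ f (-(n : ℤ)) x) (iterZ f (-(n : ℤ)) y) ≤ ε}

/-- The stable set `W^s(x)`. -/
def stableSet {X : Type*} [MetricSpace X] (f : X ≃ₜ X) (x : X) : Set X :=
  {y | Tendsto (fun n : ℕ => dist (iterZ f n x) (iterZ f n y)) atTop (𝓝 0)}

/-- The unstable set `W^u(x)`. -/
def unstableSet {X : Type*} [MetricSpace X] (f : X ≃ₜ X) (x : X) : Set X :=
  {y | Tendsto (fun n : ℕ => dist (iterZ f (-(n : ℤ)) x) (iterZ f (-(n : ℤ)) y)) atTop (𝓝 0)}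

/-- `f` has the pseudo orbit tracing property. -/
def POTP {X : Type*} [MetricSpace X] (f : X ≃ₜ X) : Prop :=
  ∀ ε > (0 : ℝ), ∃ δ > (0 : ℝ), ∀ u : ℤ → X,
    (∀ i : ℤ, dist (f (u i)) (u (i + 1)) < δ) →
    ∃ x : X, ∀ i : ℤ, dist (iterZ f i x) (u i) < ε

/-!
Recurrence gives returns `fⁿ x ≈ x`; by expansivity the point shadowing the resulting periodic
pseudo orbit is periodic, so periodic points are dense. Two close periodic points `p`, `q` lie on
one orbit: a point `z` shadowing the backward orbit of `p` followed by the forward orbit of `q` is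
recurrent, so its whole orbit stays close to the orbit of a single point of the finite orbit of
`q`, and by expansivity `z` is that point; being periodic, `z` then stays close to the orbit of
`p` for all times as well, so `z = p`. By compactness only finitely many periodic orbits occur,
so the periodic points form a finite dense set.
-/

open Function

section iterZ

variable {X : Type*} [TopologicalSpace X] (f : X ≃ₜ X)

@[simp]
lemma iterZ_zero (x : X) : iterZ f 0 x = x := rfl

@[simp]
lemma iterZ_one (x : X) : iterZ f 1 x = f x := by simp [iterZ]

lemma iterZ_add (a b : ℤ) (x : X) : iterZ f (a + b) x = iterZ f a (iterZ f b x) := by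
  simp [iterZ, zpow_add, Equiv.Perm.mul_apply]

lemma apply_iterZ (n : ℤ) (x : X) : f (iterZ f n x) = iterZ f (n + 1) x := by
  rw [add_comm, iterZ_add, iterZ_one]

lemma iterZ_natCast (n : ℕ) : iterZ f n = (⇑f)^[n] := by
  simp [iterZ, Equiv.Perm.coe_pow]

lemma continuous_iterZ (n : ℤ) : Continuous (iterZ f n) := by
  cases n with
  | ofNat k => simpa [iterZ_natCast] using f.continuous.iterate k
  | negSucc k =>
    rw [iterZ, zpow_negSucc, Equiv.Perm.inv_def]
    exact f.symm.continuous.iterate (k + 1)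

end iterZ

section periodic

variable {X : Type*} [TopologicalSpace X] {f : X ≃ₜ X} {n : ℕ} {x : X}

lemma isPeriodicPt_iff_iterZ : IsPeriodicPt f n x ↔ iterZ f n x = x := by
  rw [iterZ_natCast]; rfl

lemma Function.IsPeriodicPt.iterZ_add_mul (hx : IsPeriodicPt f n x) (i k : ℤ) :
    iterZ f (i + n * k) x = iterZ f i x := by
  have hfix : IsFixedPt ⇑(f.toEquiv ^ n) x := by rwa [Equiv.Perm.coe_pow]
  have hk : iterZ f (n * k) x = x := by
    have := hfix.perm_zpow k
    rwa [IsFixedPt, ← zpow_natCast, ← zpow_mul] at this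
  rw [iterZ_add, hk]

lemma Function.IsPeriodicPt.iterZ_emod (hx : IsPeriodicPt f n x) (i : ℤ) :
    iterZ f (i % n) x = iterZ f i x := by
  conv_rhs => rw [← Int.emod_add_mul_ediv i n, hx.iterZ_add_mul]

lemma Function.IsPeriodicPt.apply_iterZ (hx : IsPeriodicPt f n x) (r : ℤ) :
    IsPeriodicPt f n (iterZ f r x) := by
  rw [isPeriodicPt_iff_iterZ, ← iterZ_add, add_comm, iterZ_add, isPeriodicPt_iff_iterZ.1 hx]

lemma Function.IsPeriodicPt.finite_fullOrbit (hx : IsPeriodicPt f n x) (hn : 0 < n) :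
    (fullOrbit f x).Finite := by
  refine ((Set.finite_Ico (0 : ℤ) n).image fun i => iterZ f i x).subset ?_
  rintro _ ⟨i, rfl⟩
  exact ⟨i % n, ⟨Int.emod_nonneg i (by omega), Int.emod_lt_of_pos i (by omega)⟩, hx.iterZ_emod i⟩

end periodic

section shadowing

variable {X : Type*} [MetricSpace X] {f : X ≃ₜ X}

-- `POTP f` unfolds to `∀ ε > 0, ∃ δ > 0, ∀ u, IsPseudoOrbit f δ u → ∃ x, Shadows f ε x u`.
def IsPseudoOrbit (f : X ≃ₜ X) (δ : ℝ) (u : ℤ → X) : Prop :=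
  ∀ i, dist (f (u i)) (u (i + 1)) < δ

def Shadows (f : X ≃ₜ X) (ε : ℝ) (x : X) (u : ℤ → X) : Prop :=
  ∀ i, dist (iterZ f i x) (u i) < ε

lemma Shadows.iterZ {ε : ℝ} {x : X} {u : ℤ → X} (h : Shadows f ε x u) (n : ℤ) :
    Shadows f ε (iterZ f n x) fun i => u (i + n) := fun i => by
  rw [← iterZ_add]
  exact h (i + n)

variable {c : ℝ}

lemma ExpansiveWith.eq_of_forall_dist_le (hc : ExpansiveWith f c) {x y : X}
    (h : ∀ n, dist (iterZ f n x) (iterZ f n y) ≤ c) : x = y := by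
  by_contra hne
  obtain ⟨n, hn⟩ := hc.2 x y hne
  exact (h n).not_gt hn

lemma ExpansiveWith.eq_of_shadows (hc : ExpansiveWith f c) {ε : ℝ} (hε : 2 * ε ≤ c) {x y : X}
    {u : ℤ → X} (hx : Shadows f ε x u) (hy : Shadows f ε y u) : x = y :=
  hc.eq_of_forall_dist_le fun n => by
    linarith [dist_triangle_right (iterZ f n x) (iterZ f n y) (u n), hx n, hy n]

lemma ExpansiveWith.isPeriodicPt_of_shadows (hc : ExpansiveWith f c) {ε : ℝ} (hε : 2 * ε ≤ c)
    {n : ℕ} {x : X} {u : ℤ → X} (hu : ∀ i, u (i + n) = u i) (hx : Shadows f ε x u) :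
    IsPeriodicPt f n x := by
  rw [isPeriodicPt_iff_iterZ]
  exact hc.eq_of_shadows hε (by simpa only [hu] using hx.iterZ n) hx

end shadowing

section pseudoOrbits

variable {X : Type*} [MetricSpace X] (f : X ≃ₜ X) {δ : ℝ}

lemma isPseudoOrbit_iterZ_emod (hδ : 0 < δ) {n : ℕ} (hn : 0 < n) {x : X}
    (hx : dist (iterZ f n x) x < δ) : IsPseudoOrbit f δ fun i => iterZ f (i % n) x := by
  intro i
  have hlt := Int.emod_lt_of_pos i (Int.natCast_pos.2 hn)
  have hnonneg := Int.emod_nonneg i (Int.natCast_ne_zero.2 hn.ne')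
  dsimp only
  rw [apply_iterZ, ← Int.emod_add_emod]
  rcases (show i % n + 1 < n ∨ i % n + 1 = n by omega) with h | h
  · rw [Int.emod_eq_of_lt (by omega) h, dist_self]
    exact hδ
  · rwa [h, Int.emod_self, iterZ_zero]

lemma isPseudoOrbit_ite (hδ : 0 < δ) {p q : X} (hpq : dist (f p) (f q) < δ) :
    IsPseudoOrbit f δ fun i => if i ≤ 0 then iterZ f i p else iterZ f i q := by
  intro i
  rcases (show i < 0 ∨ i = 0 ∨ 0 < i by omega) with h | rfl | h
  · simpa [show i ≤ 0 by omega, show i + 1 ≤ 0 by omega, apply_iterZ] using hδ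
  · simpa using hpq
  · simpa [show ¬i ≤ 0 by omega, show ¬i + 1 ≤ 0 by omega, apply_iterZ] using hδ

end pseudoOrbits

section recurrence

variable {X : Type*} [MetricSpace X] {f : X ≃ₜ X} {x : X}

lemma exists_pos_dist_iterZ_lt (hx : x ∈ posLimitSet f x) {δ : ℝ} (hδ : 0 < δ) :
    ∃ n : ℕ, 0 < n ∧ dist (iterZ f n x) x < δ := by
  obtain ⟨ns, hmono, hpos, htend⟩ := hx
  obtain ⟨i, hi⟩ := (Metric.tendsto_nhds.1 htend δ hδ).exists
  exact ⟨ns i, hpos.trans_le (hmono.monotone (Nat.zero_le i)), hi⟩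

lemma exists_mem_fullOrbit_forall_dist_le (hx : x ∈ posLimitSet f x) {q : X}
    (hq : (fullOrbit f q).Finite) {ε : ℝ} (N : ℤ)
    (h : ∀ i, N ≤ i → dist (iterZ f i x) (iterZ f i q) ≤ ε) :
    ∃ w ∈ fullOrbit f q, ∀ i, dist (iterZ f i x) (iterZ f i w) ≤ ε := by
  obtain ⟨ns, hmono, -, htend⟩ := hx
  have := hq.to_subtype
  let g : ℕ → fullOrbit f q := fun j => ⟨iterZ f (ns j) q, ns j, rfl⟩
  obtain ⟨w, hw⟩ := Finite.exists_infinite_fiber g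
  refine ⟨w, w.2, fun i => ?_⟩
  have hfreq : ∃ᶠ j in atTop, g j = w :=
    Nat.frequently_atTop_iff_infinite.2 (Set.infinite_coe_iff.1 hw)
  have hlarge : ∀ᶠ j in atTop, N ≤ i + ns j := by
    filter_upwards [hmono.tendsto_atTop.eventually_ge_atTop (N - i).toNat] with j hj
    omega
  have htend' : Tendsto (fun j => iterZ f (i + ns j) x) atTop (𝓝 (iterZ f i x)) := by
    simp only [iterZ_add]
    exact ((continuous_iterZ f i).tendsto x).comp htend
  refine Metric.isClosed_closedBall.mem_of_frequently_of_tendsto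
    ((hfreq.and_eventually hlarge).mono fun j ⟨hj, hN⟩ => ?_) htend'
  rw [Metric.mem_closedBall, ← hj, ← iterZ_add]
  exact h _ hN

end recurrence

section periodicDense

variable {X : Type*} [MetricSpace X] {f : X ≃ₜ X} {c : ℝ}

lemma ExpansiveWith.exists_mem_periodicPts_dist_lt (hc : ExpansiveWith f c) (hpotp : POTP f)
    {x : X} (hx : x ∈ posLimitSet f x) {ε : ℝ} (hε : 0 < ε) :
    ∃ p ∈ periodicPts f, dist p x < ε := by
  obtain ⟨δ, hδ, hshadow⟩ := hpotp (min ε (c / 2)) (lt_min hε (half_pos hc.1))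
  obtain ⟨n, hn, hxn⟩ := exists_pos_dist_iterZ_lt hx hδ
  obtain ⟨z, hz⟩ := hshadow _ (isPseudoOrbit_iterZ_emod f hδ hn hxn)
  have hper : IsPeriodicPt f n z :=
    hc.isPeriodicPt_of_shadows (by linarith [min_le_right ε (c / 2)])
      (fun i => by simp only [Int.add_emod_right]) hz
  refine ⟨z, mk_mem_periodicPts hn hper, ?_⟩
  simpa using (hz 0).trans_le (min_le_left _ _)

lemma ExpansiveWith.dense_periodicPts (hc : ExpansiveWith f c) (hpotp : POTP f)
    (hrec : ∀ x : X, x ∈ posLimitSet f x) : Dense (periodicPts f) :=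
  Metric.dense_iff.2 fun x _ hε =>
    let ⟨p, hp, hpx⟩ := hc.exists_mem_periodicPts_dist_lt hpotp (hrec x) hε
    ⟨p, Metric.mem_ball.2 hpx, hp⟩

end periodicDense

section periodicOrbits

variable {X : Type*} [MetricSpace X] {f : X ≃ₜ X}

lemma forall_dist_iterZ_le_of_isPeriodicPt {n : ℕ} (hn : 0 < n) {x y : X}
    (hx : IsPeriodicPt f n x) (hy : IsPeriodicPt f n y) {ε : ℝ}
    (h : ∀ i ≤ 0, dist (iterZ f i x) (iterZ f i y) ≤ ε) (i : ℤ) :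
    dist (iterZ f i x) (iterZ f i y) ≤ ε := by
  have hback : i + n * -|i| ≤ 0 := by
    nlinarith [le_abs_self i, abs_nonneg i, (Int.natCast_pos.2 hn : (0 : ℤ) < n)]
  simpa only [hx.iterZ_add_mul, hy.iterZ_add_mul] using h _ hback

lemma ExpansiveWith.exists_mem_fullOrbit_of_dist_lt [CompactSpace X] {c : ℝ}
    (hc : ExpansiveWith f c) (hpotp : POTP f) (hrec : ∀ x : X, x ∈ posLimitSet f x) :
    ∃ η > 0, ∀ p ∈ periodicPts f, ∀ q ∈ periodicPts f, dist p q < η → p ∈ fullOrbit f q := by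
  obtain ⟨δ, hδ, hshadow⟩ := hpotp c hc.1
  obtain ⟨η, hη, hfη⟩ := Metric.uniformContinuous_iff.1
    (CompactSpace.uniformContinuous_of_continuous f.continuous) δ hδ
  refine ⟨η, hη, fun p hp q hq hpq => ?_⟩
  obtain ⟨l, hl, hpl⟩ := mem_periodicPts.1 hp
  obtain ⟨m, hm, hqm⟩ := mem_periodicPts.1 hq
  obtain ⟨z, hz⟩ := hshadow _ (isPseudoOrbit_ite f hδ (hfη hpq))
  obtain ⟨w, hw, hzw⟩ := exists_mem_fullOrbit_forall_dist_le (hrec z) (hqm.finite_fullOrbit hm) 1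
    fun i hi => by simpa [show ¬i ≤ 0 by omega] using (hz i).le
  obtain rfl : z = w := hc.eq_of_forall_dist_le hzw
  obtain ⟨r, rfl⟩ := hw
  have hzp : iterZ f r q = p := hc.eq_of_forall_dist_le <|
    forall_dist_iterZ_le_of_isPeriodicPt (Nat.mul_pos hm hl) ((hqm.apply_iterZ r).mul_const l)
      (hpl.const_mul m) fun i hi => by simpa [hi] using (hz i).le
  exact hzp ▸ ⟨r, rfl⟩

lemma finite_periodicPts_of_dist_lt [CompactSpace X] {η : ℝ} (hη : 0 < η)
    (h : ∀ p ∈ periodicPts f, ∀ q ∈ periodicPts f, dist p q < η → p ∈ fullOrbit f q) :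
    (periodicPts f).Finite := by
  obtain ⟨t, -, ht, hcover⟩ :=
    finite_cover_balls_of_compact (isCompact_univ (X := X)) (half_pos hη)
  have hlocal : ∀ x, (periodicPts f ∩ Metric.ball x (η / 2)).Finite := fun x => by
    rcases (periodicPts f ∩ Metric.ball x (η / 2)).eq_empty_or_nonempty with he | ⟨q, hq, hqx⟩
    · simp [he]
    obtain ⟨m, hm, hqm⟩ := mem_periodicPts.1 hq
    refine (hqm.finite_fullOrbit hm).subset fun p ⟨hp, hpx⟩ => h p hp q hq ?_
    linarith [dist_triangle_right p q x, Metric.mem_ball.1 hpx, Metric.mem_ball.1 hqx]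
  refine (ht.biUnion fun x _ => hlocal x).subset fun p hp => ?_
  obtain ⟨x, hx, hpx⟩ := Set.mem_iUnion₂.1 (hcover (Set.mem_univ p))
  exact Set.mem_biUnion hx ⟨hp, hpx⟩

end periodicOrbits

/-- If a homeomorphism of a compact metric space is pointwise positively
recurrent, expansive, and has the pseudo orbit tracing property, then the space is finite. -/
theorem stmt_4 {X : Type*} [MetricSpace X] [CompactSpace X] (f : X ≃ₜ X)
    (hrec : ∀ x : X, x ∈ posLimitSet f x) (hexp : Expansive f) (hpotp : POTP f) :
    Finite X := by
  obtain ⟨c, hc⟩ := hexp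
  obtain ⟨η, hη, horbit⟩ := hc.exists_mem_fullOrbit_of_dist_lt hpotp hrec
  have hfinite := finite_periodicPts_of_dist_lt hη horbit
  have huniv : periodicPts f = Set.univ := by
    rw [← hfinite.isClosed.closure_eq, (hc.dense_periodicPts hpotp hrec).closure_eq]
  rw [← Set.finite_univ_iff, ← huniv]
  exact hfinite
end

section
/- Let f be a minimal homeomorphism of a compact metric space (X, d) having the pseudo orbit tracing property. Then f is equicontinuous: for every ε > 0 there is δ > 0 such that d(x,y) < δ implies d(fⁿ(x), fⁿ(y)) < ε for all n ∈ ℤ. -/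
open Filter Topology

/-!
By POTP, an almost-return `d(fⁿx, x) < δ` yields a point whose orbit `ε/3`-traces the `n`-periodic
pseudo-orbit `x, fx, …, fⁿ⁻¹x, x, fx, …`. The points tracing it form a closed `fⁿ`-invariant set,
which contains an `fⁿ`-minimal set `M`. Since `f` is minimal, the translates `fⁱM` cover `X`, and
two of them are equal or disjoint, so they form a finite partition of `X` into clopen sets. Every
`fᵏ`-image of a piece stays within `ε/3` of a point of the pseudo-orbit, so a Lebesgue number of
this partition is the required `δ`.
-/

namespace Homeomorph

variable {X : Type*} [TopologicalSpace X]

theorem coe_pow (f : X ≃ₜ X) (n : ℕ) : ⇑(f ^ n) = (⇑f)^[n] := by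
  induction n with
  | zero => rfl
  | succ n ih => rw [pow_succ', Function.iterate_succ', ← ih]; rfl

theorem image_zpow_eq_of_image_eq {g : X ≃ₜ X} {s : Set X} (h : g '' s = s) (q : ℤ) :
    ⇑(g ^ q) '' s = s := by
  have hinv : ⇑g⁻¹ '' s = s := by
    conv_lhs => rw [← h]
    simp [Set.image_image]
  induction q using Int.induction_on with
  | zero => exact Set.image_id s
  | succ q ih =>
    rw [zpow_add_one, show ⇑(g ^ (q : ℤ) * g) = ⇑(g ^ (q : ℤ)) ∘ g from rfl, Set.image_comp, h, ih]
  | pred q ih =>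
    rw [zpow_sub_one, show ⇑(g ^ (-q : ℤ) * g⁻¹) = ⇑(g ^ (-q : ℤ)) ∘ ⇑g⁻¹ from rfl,
      Set.image_comp, hinv, ih]

end Homeomorph

theorem iterZ_eq_coe_zpow {X : Type*} [TopologicalSpace X] (f : X ≃ₜ X) (n : ℤ) :
    iterZ f n = ⇑(f ^ n) := by
  let toPerm : (X ≃ₜ X) →* Equiv.Perm X := ⟨⟨Homeomorph.toEquiv, rfl⟩, fun _ _ => rfl⟩
  exact congrArg DFunLike.coe (map_zpow toPerm f n).symm

theorem exists_dist_iterate_lt {X : Type*} [MetricSpace X] [CompactSpace X] [Nonempty X]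
    (f : X → X) {δ : ℝ} (hδ : 0 < δ) : ∃ x, ∃ n, 0 < n ∧ dist (f^[n] x) x < δ := by
  obtain ⟨x₀⟩ := ‹Nonempty X›
  obtain ⟨_, φ, hφ, hlim⟩ := CompactSpace.tendsto_subseq fun k => f^[k] x₀
  obtain ⟨N, hN⟩ := Metric.cauchySeq_iff'.1 hlim.cauchySeq δ hδ
  have hlt := hφ N.lt_succ_self
  refine ⟨f^[φ N] x₀, φ (N + 1) - φ N, Nat.sub_pos_of_lt hlt, ?_⟩
  rw [← Function.iterate_add_apply, Nat.sub_add_cancel hlt.le]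
  exact hN (N + 1) N.le_succ

section MinimalSet

variable {X : Type*} [TopologicalSpace X] {g : X ≃ₜ X}

theorem exists_isMinimalSet_subset [CompactSpace X] {S : Set X} (hne : S.Nonempty)
    (hcl : IsClosed S) (hinv : g '' S = S) : ∃ M ⊆ S, IsMinimalSet g M := by
  let C : Set (Set X) := {E | E.Nonempty ∧ IsClosed E ∧ g '' E = E}
  have hchain : ∀ c ⊆ C, IsChain (· ⊆ ·) c → c.Nonempty → ∃ lb ∈ C, ∀ s ∈ c, lb ⊆ s := by
    intro c hcC hc hcne
    have : Nonempty c := hcne.to_subtype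
    have hdir : DirectedOn (· ⊇ ·) c := fun E hE F hF =>
      (hc.total hE hF).elim (fun h => ⟨E, hE, subset_rfl, h⟩) fun h => ⟨F, hF, h, subset_rfl⟩
    refine ⟨⋂₀ c, ⟨?_, isClosed_sInter fun E hE => (hcC hE).2.1, ?_⟩,
      fun _ => Set.sInter_subset_of_mem⟩
    · exact IsCompact.nonempty_sInter_of_directed_nonempty_isCompact_isClosed hdir
        (fun E hE => (hcC hE).1) (fun E hE => (hcC hE).2.1.isCompact) fun E hE => (hcC hE).2.1
    · rw [Set.sInter_eq_iInter, Set.image_iInter g.bijective]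
      exact Set.iInter_congr fun E => (hcC E.2).2.2
  obtain ⟨M, hMS, hM⟩ := zorn_superset_nonempty C hchain S ⟨hne, hcl, hinv⟩
  exact ⟨M, hMS, hM.prop.1, hM.prop.2.1, hM.prop.2.2,
    fun E hEM hEne hEcl hEinv => hM.eq_of_subset ⟨hEne, hEcl, hEinv⟩ hEM⟩

theorem IsMinimalSet.image_of_commute {M : Set X} (hM : IsMinimalSet g M) {h : X ≃ₜ X}
    (hc : Commute g h) : IsMinimalSet g (h '' M) := by
  obtain ⟨hne, hcl, hinv, hmin⟩ := hM
  have hcomm : ∀ (k : X ≃ₜ X), Commute g k → ∀ E : Set X, g '' (k '' E) = k '' (g '' E) :=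
    fun k hk E => by rw [Set.image_image, Set.image_image]; exact Set.image_congr fun x _ =>
      DFunLike.congr_fun hk.eq x
  refine ⟨hne.image h, h.isClosed_image.2 hcl, by rw [hcomm h hc, hinv], ?_⟩
  intro E hEM hEne hEcl hEinv
  have hpull : h.symm '' E = M :=
    hmin _ (Set.image_subset_iff.2 (by rwa [h.preimage_symm])) (hEne.image _)
      (h.symm.isClosed_image.2 hEcl) ((hcomm h⁻¹ hc.inv_right E).trans (congrArg _ hEinv))
  rw [← hpull, Set.image_image]
  simp

theorem IsMinimalSet.eq_of_inter_nonempty {M N : Set X} (hM : IsMinimalSet g M)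
    (hN : IsMinimalSet g N) (h : (M ∩ N).Nonempty) : M = N := by
  have hinv : g '' (M ∩ N) = M ∩ N := by
    rw [Set.image_inter g.injective, hM.2.2.1, hN.2.2.1]
  have hcl : IsClosed (M ∩ N) := hM.2.1.inter hN.2.1
  rw [← hM.2.2.2 _ Set.inter_subset_left h hcl hinv, hN.2.2.2 _ Set.inter_subset_right h hcl hinv]

end MinimalSet

section MinimalHomeomorph

variable {X : Type*} [TopologicalSpace X] {f : X ≃ₜ X}

theorem image_zpow_emod {n : ℤ} {M : Set X} (hM : ⇑(f ^ n) '' M = M) (i : ℤ) :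
    ⇑(f ^ i) '' M = ⇑(f ^ (i % n)) '' M := by
  conv_lhs => rw [← Int.emod_add_mul_ediv i n, zpow_add, zpow_mul]
  rw [show ⇑(f ^ (i % n) * (f ^ n) ^ (i / n)) = ⇑(f ^ (i % n)) ∘ ⇑((f ^ n) ^ (i / n)) from rfl,
    Set.image_comp, Homeomorph.image_zpow_eq_of_image_eq hM]

theorem iUnion_image_zpow_eq_univ (hmin : ∀ x : X, Dense (fullOrbit f x)) {n : ℤ} (hn : 0 < n)
    {M : Set X} (hne : M.Nonempty) (hcl : IsClosed M) (hinv : ⇑(f ^ n) '' M = M) :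
    ⋃ i ∈ Set.Ico 0 n, ⇑(f ^ i) '' M = Set.univ := by
  have hclosed : IsClosed (⋃ i ∈ Set.Ico 0 n, ⇑(f ^ i) '' M) :=
    (Set.finite_Ico 0 n).isClosed_biUnion fun i _ => (f ^ i).isClosed_image.2 hcl
  obtain ⟨m, hm⟩ := hne
  refine Set.eq_univ_of_univ_subset ?_
  rw [← (hmin m).closure_eq, hclosed.closure_subset_iff]
  rintro _ ⟨i, rfl⟩
  refine Set.mem_biUnion (x := i % n) ⟨Int.emod_nonneg i hn.ne', Int.emod_lt_of_pos i hn⟩ ?_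
  show iterZ f i m ∈ _
  rw [← image_zpow_emod hinv i, iterZ_eq_coe_zpow]
  exact Set.mem_image_of_mem _ hm

theorem IsMinimalSet.isOpen_of_zpow (hmin : ∀ x : X, Dense (fullOrbit f x)) {n : ℤ}
    (hn : 0 < n) {M : Set X} (hM : IsMinimalSet (f ^ n) M) : IsOpen M := by
  have hcover := iUnion_image_zpow_eq_univ hmin hn hM.1 hM.2.1 hM.2.2.1
  have hcompl : Mᶜ = ⋃ i ∈ {i ∈ Set.Ico 0 n | ⇑(f ^ i) '' M ≠ M}, ⇑(f ^ i) '' M := by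
    ext x
    simp only [Set.mem_compl_iff, Set.mem_iUnion, Set.mem_ofPred_eq, exists_prop]
    constructor
    · intro hx
      obtain ⟨i, hi, hxi⟩ := Set.mem_iUnion₂.1 (hcover.symm ▸ Set.mem_univ x)
      exact ⟨i, ⟨hi, fun h => hx (h ▸ hxi)⟩, hxi⟩
    · rintro ⟨i, ⟨-, hne⟩, hxi⟩ hx
      exact hne ((hM.image_of_commute (Commute.zpow_zpow_self f n i)).eq_of_inter_nonempty hM
        ⟨x, hxi, hx⟩)
  rw [← isClosed_compl_iff, hcompl]
  exact ((Set.finite_Ico 0 n).subset fun i hi => hi.1).isClosed_biUnion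
    fun i _ => (f ^ i).isClosed_image.2 hM.2.1

end MinimalHomeomorph

section Tracing

variable {X : Type*} [MetricSpace X] (f : X ≃ₜ X)

def tracingSet (u : ℤ → X) (r : ℝ) : Set X :=
  {w | ∀ j, dist ((f ^ j) w) (u j) ≤ r}

theorem isClosed_tracingSet (u : ℤ → X) (r : ℝ) : IsClosed (tracingSet f u r) := by
  simp only [tracingSet, Set.ofPred_forall]
  exact isClosed_iInter fun j =>
    isClosed_le ((f ^ j).continuous.dist continuous_const) continuous_const

theorem zpow_apply_mem_tracingSet {u : ℤ → X} {r : ℝ} {m : ℤ} (hu : Function.Periodic u m)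
    {w : X} (hw : w ∈ tracingSet f u r) : (f ^ m) w ∈ tracingSet f u r := fun j => by
  simpa [← hu j, zpow_add] using hw (j + m)

theorem image_zpow_tracingSet {u : ℤ → X} {r : ℝ} {n : ℤ} (hu : Function.Periodic u n) :
    ⇑(f ^ n) '' tracingSet f u r = tracingSet f u r := by
  refine (Set.image_subset_iff.2 fun w => zpow_apply_mem_tracingSet f hu).antisymm
    fun w hw => ⟨(f ^ (-n)) w, zpow_apply_mem_tracingSet f hu.neg hw, ?_⟩
  rw [← Homeomorph.mul_apply, ← zpow_add, add_neg_cancel, zpow_zero, Homeomorph.one_apply]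

theorem dist_zpow_le_of_mem_image_tracingSet {u : ℤ → X} {r : ℝ} {i : ℤ} {a b : X}
    (ha : a ∈ ⇑(f ^ i) '' tracingSet f u r) (hb : b ∈ ⇑(f ^ i) '' tracingSet f u r)
    (k : ℤ) : dist ((f ^ k) a) ((f ^ k) b) ≤ 2 * r := by
  obtain ⟨v, hv, rfl⟩ := ha
  obtain ⟨w, hw, rfl⟩ := hb
  simp only [← Homeomorph.mul_apply, ← zpow_add]
  linarith [dist_triangle_right ((f ^ (k + i)) v) ((f ^ (k + i)) w) (u (k + i)),
    hv (k + i), hw (k + i)]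

def cyclicPseudoOrbit (x : X) (n j : ℤ) : X :=
  (f ^ (j % n)) x

theorem cyclicPseudoOrbit_periodic (x : X) (n : ℤ) :
    Function.Periodic (cyclicPseudoOrbit f x n) n := fun j => by
  simp [cyclicPseudoOrbit]

theorem dist_cyclicPseudoOrbit_lt {x : X} {n : ℤ} (hn : 0 < n) {δ : ℝ}
    (hx : dist ((f ^ n) x) x < δ) (j : ℤ) :
    dist (f (cyclicPseudoOrbit f x n j)) (cyclicPseudoOrbit f x n (j + 1)) < δ := by
  have hf : f (cyclicPseudoOrbit f x n j) = (f ^ (j % n + 1)) x := by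
    rw [add_comm, zpow_one_add, Homeomorph.mul_apply]; rfl
  have hmod : (j + 1) % n = (j % n + 1) % n := (Int.emod_add_emod j n 1).symm
  rw [hf, cyclicPseudoOrbit, hmod]
  rcases (Int.add_one_le_of_lt (Int.emod_lt_of_pos j hn)).lt_or_eq with hlt | heq
  · rw [Int.emod_eq_of_lt (by linarith [Int.emod_nonneg j hn.ne']) hlt, dist_self]
    exact dist_nonneg.trans_lt hx
  · rwa [heq, Int.emod_self, zpow_zero, Homeomorph.one_apply]

end Tracing

section MinimalPOTP

variable {X : Type*} [MetricSpace X] [CompactSpace X] {f : X ≃ₜ X}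

theorem POTP.exists_isMinimalSet_subset_tracingSet [Nonempty X] (hpotp : POTP f) {r : ℝ}
    (hr : 0 < r) :
    ∃ n : ℤ, 0 < n ∧ ∃ u : ℤ → X, ∃ M ⊆ tracingSet f u r, IsMinimalSet (f ^ n) M := by
  obtain ⟨δ, hδ, htrace⟩ := hpotp r hr
  obtain ⟨x, n, hn, hx⟩ := exists_dist_iterate_lt f hδ
  rw [← Homeomorph.coe_pow, ← zpow_natCast] at hx
  have hn' : (0 : ℤ) < n := by exact_mod_cast hn
  obtain ⟨z, hz⟩ := htrace _ (dist_cyclicPseudoOrbit_lt f hn' hx)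
  have hz' : z ∈ tracingSet f (cyclicPseudoOrbit f x n) r := fun j => by
    rw [← iterZ_eq_coe_zpow]; exact (hz j).le
  exact ⟨n, hn', _, exists_isMinimalSet_subset ⟨z, hz'⟩ (isClosed_tracingSet f _ r)
    (image_zpow_tracingSet f (cyclicPseudoOrbit_periodic f x n))⟩

theorem IsMinimalSet.exists_dist_zpow_le_of_subset_tracingSet
    (hmin : ∀ x : X, Dense (fullOrbit f x)) {n : ℤ} (hn : 0 < n) {M : Set X}
    (hM : IsMinimalSet (f ^ n) M) {u : ℤ → X} {r : ℝ} (hMu : M ⊆ tracingSet f u r) :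
    ∃ δ > 0, ∀ a b : X, dist a b < δ → ∀ k : ℤ, dist ((f ^ k) a) ((f ^ k) b) ≤ 2 * r := by
  have hcover := iUnion_image_zpow_eq_univ hmin hn hM.1 hM.2.1 hM.2.2.1
  obtain ⟨δ, hδ, hleb⟩ := lebesgue_number_lemma_of_metric isCompact_univ
    (fun i : ℤ => (f ^ i).isOpen_image.2 (hM.isOpen_of_zpow hmin hn))
    (hcover.symm.subset.trans (Set.iUnion₂_subset_iUnion _ _))
  refine ⟨δ, hδ, fun a b hab k => ?_⟩
  obtain ⟨i, hi⟩ := hleb a trivial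
  have hpiece := Set.image_mono (f := ⇑(f ^ i)) hMu
  exact dist_zpow_le_of_mem_image_tracingSet f (hpiece (hi (Metric.mem_ball_self hδ)))
    (hpiece (hi (Metric.mem_ball'.2 hab))) k

end MinimalPOTP

/-- (Mai–Ye) A minimal homeomorphism of a compact metric space with the
pseudo orbit tracing property is equicontinuous. -/
theorem stmt_15 {X : Type*} [MetricSpace X] [CompactSpace X] (f : X ≃ₜ X)
    (hmin : ∀ x : X, Dense (fullOrbit f x)) (hpotp : POTP f) :
    ∀ ε > (0 : ℝ), ∃ δ > (0 : ℝ), ∀ x y : X, dist x y < δ →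
      ∀ n : ℤ, dist (iterZ f n x) (iterZ f n y) < ε := by
  intro ε hε
  cases isEmpty_or_nonempty X
  · exact ⟨1, one_pos, fun x => isEmptyElim x⟩
  obtain ⟨n, hn, u, M, hMu, hM⟩ := hpotp.exists_isMinimalSet_subset_tracingSet (r := ε / 3)
    (by positivity)
  obtain ⟨δ, hδ, hsmall⟩ := hM.exists_dist_zpow_le_of_subset_tracingSet hmin hn hMu
  refine ⟨δ, hδ, fun x y hxy k => ?_⟩
  rw [iterZ_eq_coe_zpow]
  linarith [hsmall x y hxy k]
end
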